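/- arXiv:1201.1926 — 2 statements merged into one kernel-verified Lean document; each statement's English description precedes it below -/
import Mathlib

section
/- Let f be a transcendental entire function, let R0 > 0 be such that M(r, f) > r for all r ≥ R0, and let ε : [R0, ∞) → (0, 1) be a nonincreasing function such that ε(M^n(r, f)) ≥ ε(r)^{n+1} for all r ≥ R0 and all n ≥ 1. Define η(r) = ε(r) M(r, f) for r ≥ R0. Then there exists R1 ≥ R0 such that η maps [R1, ∞) into itself and, for every R' ≥ R1, A(f) = { z ∈ ℂ : there exists ℓ ∈ ℕ such that |f^{n+ℓ}(z)| ≥ η^n(R') for all n ∈ ℕ }, where η^n denotes the n-th iterate of η. -/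
/-- The maximum modulus function `M(r, f) = max_{|z| = r} |f z|`. -/
noncomputable def maxMod (f : ℂ → ℂ) (r : ℝ) : ℝ :=
  sSup ((fun z => ‖f z‖) '' Metric.sphere (0 : ℂ) r)

/-- `f` is a transcendental entire function: differentiable on all of `ℂ`
and not (the evaluation of) a polynomial. -/
def EntireTranscendental (f : ℂ → ℂ) : Prop :=
  Differentiable ℂ f ∧ ¬∃ p : Polynomial ℂ, ∀ z, f z = p.eval z

/-- The fast escaping set `A(f)`. -/
def fastEscaping (f : ℂ → ℂ) : Set ℂ :=
  {z : ℂ | ∃ R : ℝ, 0 < R ∧ (∀ r ≥ R, r < maxMod f r) ∧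
    ∃ ℓ : ℕ, ∀ n : ℕ, (maxMod f)^[n] R ≤ ‖f^[n + ℓ] z‖}

/-!
Two growth properties of a transcendental entire `f` drive the proof: `M(r)` eventually exceeds
every polynomial, and, splitting the Taylor series and using Cauchy's estimates,
`M(B u) ≥ B³ M(u) / 4` for all large `u` and `B ≥ 2`. The first, together with the assumptions on
`ε`, gives `ε(r) ≥ 1/r` for large `r`, hence `η(r) ≥ r²`, so `η` maps `[R₁, ∞)` into itself.
Since `η ≤ M`, the `η`-orbit of `R'` is dominated by `M`-orbits, which gives one inclusion.
Conversely, the `η`-orbit loses at most a factor `ε(R')^(n+1)` at step `n`, which the second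
property absorbs, so after a shift of finitely many steps the `η`-orbit dominates the `M`-orbit
of `R₁`.
-/

open Filter Topology Finset
open scoped Nat

section MaxMod

variable {f : ℂ → ℂ}

lemma maxMod_nonneg (f : ℂ → ℂ) (r : ℝ) : 0 ≤ maxMod f r :=
  Real.sSup_nonneg <| by rintro _ ⟨z, -, rfl⟩; positivity

lemma maxMod_of_neg (f : ℂ → ℂ) {r : ℝ} (hr : r < 0) : maxMod f r = 0 := by
  simp [maxMod, Metric.sphere_eq_empty_of_neg hr]

lemma isCompact_image_norm_sphere (hc : Continuous f) (r : ℝ) :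
    IsCompact ((fun z => ‖f z‖) '' Metric.sphere (0 : ℂ) r) :=
  (isCompact_sphere 0 r).image (continuous_norm.comp hc)

lemma norm_le_maxMod (hc : Continuous f) {z : ℂ} : ‖f z‖ ≤ maxMod f ‖z‖ :=
  le_csSup (isCompact_image_norm_sphere hc _).bddAbove ⟨z, by simp, rfl⟩

lemma exists_norm_eq_maxMod (hc : Continuous f) {r : ℝ} (hr : 0 ≤ r) :
    ∃ z : ℂ, ‖z‖ = r ∧ ‖f z‖ = maxMod f r := by
  obtain ⟨z, hz, hmax⟩ := (isCompact_image_norm_sphere hc r).sSup_mem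
    ((NormedSpace.sphere_nonempty.2 hr).image _)
  exact ⟨z, mem_sphere_zero_iff_norm.1 hz, hmax⟩

lemma norm_le_maxMod_of_norm_le (hd : Differentiable ℂ f) {z : ℂ} {r : ℝ} (hz : ‖z‖ ≤ r) :
    ‖f z‖ ≤ maxMod f r := by
  rcases (norm_nonneg z).trans hz |>.eq_or_lt with rfl | hr
  · simpa [norm_le_zero_iff.1 hz] using norm_le_maxMod hd.continuous (z := 0)
  refine Complex.norm_le_of_forall_mem_frontier_norm_le (U := Metric.ball 0 r)
    Metric.isBounded_ball hd.diffContOnCl (fun w hw => ?_)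
    (by simpa [closure_ball (0 : ℂ) hr.ne'] using hz)
  rw [frontier_ball (0 : ℂ) hr.ne', mem_sphere_zero_iff_norm] at hw
  exact hw ▸ norm_le_maxMod hd.continuous

lemma maxMod_mono (hd : Differentiable ℂ f) : Monotone (maxMod f) := by
  intro r s hrs
  rcases lt_or_ge r 0 with hr | hr
  · exact (maxMod_of_neg f hr).trans_le (maxMod_nonneg f s)
  obtain ⟨z, rfl, hz⟩ := exists_norm_eq_maxMod hd.continuous hr
  exact hz ▸ norm_le_maxMod_of_norm_le hd hrs

lemma maxMod_le_of_tendsto (hc : Continuous f) {x : ℕ → ℝ} {L C : ℝ} (hL : 0 < L)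
    (hx : Tendsto x atTop (𝓝 L)) (hxC : ∀ n, maxMod f (x n) ≤ C) : maxMod f L ≤ C := by
  obtain ⟨z, hz, hzL⟩ := exists_norm_eq_maxMod hc hL.le
  have hw : Tendsto (fun n => ((x n / L : ℝ) : ℂ) * z) atTop (𝓝 z) := by
    simpa [hL.ne'] using
      ((Complex.continuous_ofReal.tendsto _).comp (hx.div_const L)).mul_const z
  refine hzL ▸ le_of_tendsto ((continuous_norm.comp hc).tendsto z |>.comp hw) ?_
  filter_upwards [hx.eventually_const_lt hL] with n hn
  refine (norm_le_maxMod hc).trans (le_of_eq_of_le ?_ (hxC n))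
  rw [norm_mul, Complex.norm_real, Real.norm_of_nonneg (by positivity), hz,
    div_mul_cancel₀ _ hL.ne']

lemma monotone_iterate_maxMod (hd : Differentiable ℂ f) {R : ℝ} (hR : R ≤ maxMod f R) :
    Monotone fun n => (maxMod f)^[n] R :=
  (maxMod_mono hd).monotone_iterate_of_le_map hR

lemma tendsto_iterate_maxMod (hd : Differentiable ℂ f) {R : ℝ} (hR : 0 < R)
    (hM : ∀ r ≥ R, r < maxMod f r) : Tendsto (fun n => (maxMod f)^[n] R) atTop atTop := by
  have hmono := monotone_iterate_maxMod hd (hM R le_rfl).le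
  refine (tendsto_atTop_of_monotone hmono).resolve_right fun ⟨L, hL⟩ => ?_
  have hRL : R ≤ L := hmono.ge_of_tendsto hL 0
  have hML : maxMod f L ≤ L := maxMod_le_of_tendsto hd.continuous (hR.trans_le hRL) hL
    fun n => by simpa [← Function.iterate_succ_apply'] using hmono.ge_of_tendsto hL (n + 1)
  exact (hM L hRL).not_ge hML

end MaxMod

section Taylor

variable {f : ℂ → ℂ}

noncomputable def taylorCoeff (f : ℂ → ℂ) (n : ℕ) : ℂ := (n ! : ℂ)⁻¹ * iteratedDeriv n f 0

lemma hasSum_taylorCoeff (hd : Differentiable ℂ f) (z : ℂ) :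
    HasSum (fun n => taylorCoeff f n * z ^ n) (f z) := by
  simpa [taylorCoeff, mul_comm, mul_left_comm] using
    Complex.hasSum_taylorSeries_of_entire hd 0 z

lemma norm_taylorCoeff_mul_pow_le (hd : Differentiable ℂ f) {r : ℝ} (hr : 0 < r) (n : ℕ) :
    ‖taylorCoeff f n‖ * r ^ n ≤ maxMod f r := by
  have hcauchy := Complex.norm_iteratedDeriv_le_of_forall_mem_sphere_norm_le n hr
    hd.diffContOnCl fun z hz => (mem_sphere_zero_iff_norm.1 hz ▸ norm_le_maxMod hd.continuous)
  rw [taylorCoeff, norm_mul, norm_inv, Complex.norm_natCast, mul_assoc,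
    inv_mul_le_iff₀ (by positivity), ← le_div_iff₀ (by positivity)]
  exact hcauchy

lemma exists_taylorCoeff_ne_zero (hf : EntireTranscendental f) (k : ℕ) :
    ∃ m, k ≤ m ∧ taylorCoeff f m ≠ 0 := by
  by_contra! h
  refine hf.2 ⟨∑ n ∈ range k, Polynomial.C (taylorCoeff f n) * Polynomial.X ^ n, fun z => ?_⟩
  refine (hasSum_taylorCoeff hf.1 z).unique
    (hasSum_sum_of_ne_finset_zero (s := range k) fun m hm => ?_) |>.trans
    (by simp [Polynomial.eval_finsetSum])
  simp [h m (by simpa using hm)]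

lemma eventually_mul_pow_le_maxMod (hf : EntireTranscendental f) (c : ℝ) (k : ℕ) :
    ∀ᶠ r in atTop, c * r ^ k ≤ maxMod f r := by
  obtain ⟨m, hkm, hm⟩ := exists_taylorCoeff_ne_zero hf (k + 1)
  have hA : 0 < ‖taylorCoeff f m‖ := norm_pos_iff.2 hm
  filter_upwards [eventually_ge_atTop 1, eventually_ge_atTop (c / ‖taylorCoeff f m‖)]
    with r hr1 hrc
  calc c * r ^ k ≤ (‖taylorCoeff f m‖ * r) * r ^ k := by
        gcongr; rwa [div_le_iff₀' hA] at hrc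
    _ = ‖taylorCoeff f m‖ * r ^ (k + 1) := by ring
    _ ≤ ‖taylorCoeff f m‖ * r ^ m := by gcongr
    _ ≤ maxMod f r := norm_taylorCoeff_mul_pow_le hf.1 (by positivity) m

/-- Splitting the Taylor series at `p`: the head is a polynomial of degree `< p`, while the
Cauchy estimates on the circle of radius `B ‖z‖` make the tail geometric with ratio `B⁻¹ ≤ 1/2`. -/
lemma norm_le_head_add_tail (hd : Differentiable ℂ f) {z : ℂ} {B : ℝ} (hz : 1 ≤ ‖z‖) (hB : 2 ≤ B)
    (p : ℕ) :
    ‖f z‖ ≤ (∑ n ∈ range p, ‖taylorCoeff f n‖) * ‖z‖ ^ p + 2 * maxMod f (B * ‖z‖) / B ^ p := by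
  set u := ‖z‖
  have hB0 : 0 < B := by linarith
  have hBinv : B⁻¹ < 1 := inv_lt_one_of_one_lt₀ (by linarith)
  have htail := (hasSum_nat_add_iff' p).2 (hasSum_taylorCoeff hd z)
  have hgeom := ((hasSum_geometric_of_lt_one (by positivity) hBinv).mul_left
    (maxMod f (B * u) * B⁻¹ ^ p))
  have htail_le := htail.norm_le_of_bounded hgeom fun n => by
    calc ‖taylorCoeff f (n + p) * z ^ (n + p)‖
        = ‖taylorCoeff f (n + p)‖ * (B * u) ^ (n + p) * B⁻¹ ^ (n + p) := by
          rw [norm_mul, norm_pow, mul_assoc, ← mul_pow, mul_right_comm,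
            mul_inv_cancel₀ hB0.ne', one_mul]
      _ ≤ maxMod f (B * u) * B⁻¹ ^ (n + p) := by
          gcongr; exact norm_taylorCoeff_mul_pow_le hd (by positivity) _
      _ = maxMod f (B * u) * B⁻¹ ^ p * B⁻¹ ^ n := by ring
  have hhead : ‖∑ n ∈ range p, taylorCoeff f n * z ^ n‖
      ≤ (∑ n ∈ range p, ‖taylorCoeff f n‖) * u ^ p := by
    refine (norm_sum_le _ _).trans ?_
    rw [sum_mul]
    gcongr with n hn
    rw [norm_mul, norm_pow]
    exact mul_le_mul_of_nonneg_left (pow_le_pow_right₀ hz (mem_range.1 hn).le) (norm_nonneg _)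
  have hratio : (1 - B⁻¹)⁻¹ ≤ 2 := by
    rw [inv_le_comm₀ (by linarith) two_pos]
    linarith [inv_anti₀ two_pos hB]
  calc ‖f z‖ ≤ ‖∑ n ∈ range p, taylorCoeff f n * z ^ n‖
        + ‖f z - ∑ n ∈ range p, taylorCoeff f n * z ^ n‖ := norm_le_insert' _ _
    _ ≤ (∑ n ∈ range p, ‖taylorCoeff f n‖) * u ^ p
        + maxMod f (B * u) * B⁻¹ ^ p * 2 := by
      gcongr
      have := maxMod_nonneg f (B * u)
      exact htail_le.trans (by gcongr)
    _ = _ := by rw [inv_pow]; ring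

lemma eventually_pow_mul_maxMod_le (hf : EntireTranscendental f) (p : ℕ) :
    ∀ᶠ u in atTop, ∀ B ≥ 2, B ^ p * maxMod f u ≤ 4 * maxMod f (B * u) := by
  filter_upwards [eventually_ge_atTop 1,
    eventually_mul_pow_le_maxMod hf (2 * ∑ n ∈ range p, ‖taylorCoeff f n‖) p] with u hu1 hu B hB
  obtain ⟨z, rfl, hz⟩ := exists_norm_eq_maxMod hf.1.continuous (zero_le_one.trans hu1)
  have hsplit := hz ▸ norm_le_head_add_tail hf.1 hu1 hB p
  have hBp : 0 < B ^ p := by positivity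
  rw [← le_div_iff₀' hBp, mul_div_assoc]
  linarith [mul_div_assoc 2 (maxMod f (B * ‖z‖)) (B ^ p)]

section Sequences

lemma exists_le_lt_succ_of_tendsto {α : Type*} [LinearOrder α] [NoMaxOrder α] {x : ℕ → α}
    (hx : Tendsto x atTop atTop) {r : α} (hr : x 0 ≤ r) : ∃ n, x n ≤ r ∧ r < x (n + 1) := by
  classical
  have hex : ∃ j, r < x j := (hx.eventually_gt_atTop r).exists
  have hspec := Nat.find_spec hex
  obtain ⟨n, hn⟩ := Nat.exists_eq_succ_of_ne_zero (n := Nat.find hex) fun h =>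
    (h ▸ hspec).not_ge hr
  rw [hn] at hspec
  exact ⟨n, not_lt.1 (Nat.find_min hex (by omega)), hspec⟩

lemma eventually_pow_le_of_sq_mul_le {x : ℕ → ℝ} {c : ℝ} (hc : 1 ≤ c)
    (hx : Tendsto x atTop atTop) (hstep : ∀ᶠ n in atTop, c ^ 2 * x n ≤ x (n + 1)) (m : ℕ) :
    ∀ᶠ n in atTop, c ^ (n + m) ≤ x n := by
  obtain ⟨N, hN⟩ := eventually_atTop.1 (hstep.and (hx.eventually_ge_atTop 1))
  have hgrow : ∀ j, c ^ (2 * j) ≤ x (N + j) := by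
    intro j
    induction j with
    | zero => simpa using (hN N le_rfl).2
    | succ j ih =>
      calc c ^ (2 * (j + 1)) = c ^ 2 * c ^ (2 * j) := by ring
        _ ≤ c ^ 2 * x (N + j) := by gcongr
        _ ≤ x (N + (j + 1)) := (hN (N + j) (by omega)).1
  filter_upwards [eventually_ge_atTop (2 * N + m)] with n hn
  obtain ⟨j, rfl⟩ := Nat.exists_eq_add_of_le (show N ≤ n by omega)
  exact (pow_le_pow_right₀ hc (by omega)).trans (hgrow j)

lemma eventually_pow_le_iterate_of_sq_le {g : ℝ → ℝ} {R : ℝ} (hR : 2 ≤ R)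
    (hg : ∀ r ≥ R, r ^ 2 ≤ g r) {r : ℝ} (hr : R ≤ r) {c : ℝ} (hc : 1 ≤ c) (m : ℕ) :
    ∀ᶠ n in atTop, c ^ (n + m) ≤ g^[n] r := by
  have hge : ∀ n, R ≤ g^[n] r := fun n => by
    induction n with
    | zero => exact hr
    | succ n ih =>
      rw [Function.iterate_succ_apply']
      nlinarith [hg _ ih]
  have hsq : ∀ n, (g^[n] r) ^ 2 ≤ g^[n + 1] r := fun n =>
    (Function.iterate_succ_apply' g n r).symm ▸ hg _ (hge n)
  have hx : Tendsto (fun n => g^[n] r) atTop atTop :=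
    tendsto_atTop_of_geom_le (by linarith [hge 0]) one_lt_two fun n => by nlinarith [hsq n, hge n]
  refine eventually_pow_le_of_sq_mul_le hc hx ?_ m
  filter_upwards [hx.eventually_ge_atTop (c ^ 2)] with n hn
  nlinarith [hsq n, hge n]

end Sequences

section Orbits

variable {f : ℂ → ℂ}

/-- For `M^n(R₀) ≤ r < M^{n+1}(R₀)` we have `ε r ≥ ε(R₀)^(n+2)`, while the orbit eventually
outgrows `ε(R₀)^(-n-2)` because `M(r) / r → ∞`. -/
lemma eventually_inv_le_of_iterate_maxMod (hf : EntireTranscendental f) {R0 : ℝ} (hR0 : 0 < R0)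
    (hM : ∀ r ≥ R0, r < maxMod f r) {ε : ℝ → ℝ} (hε0 : 0 < ε R0) (hε1 : ε R0 ≤ 1)
    (hεmono : ∀ r s, R0 ≤ r → r ≤ s → ε s ≤ ε r)
    (hεM : ∀ n : ℕ, 1 ≤ n → ε R0 ^ (n + 1) ≤ ε ((maxMod f)^[n] R0)) :
    ∀ᶠ r in atTop, r⁻¹ ≤ ε r := by
  set x := fun n => (maxMod f)^[n] R0
  have hx : Tendsto x atTop atTop := tendsto_iterate_maxMod hf.1 hR0 hM
  have hmono : Monotone x := monotone_iterate_maxMod hf.1 (hM R0 le_rfl).le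
  have hstep : ∀ᶠ n in atTop, (ε R0)⁻¹ ^ 2 * x n ≤ x (n + 1) := by
    filter_upwards [hx.eventually (eventually_mul_pow_le_maxMod hf ((ε R0)⁻¹ ^ 2) 1)] with n hn
    simpa [x, Function.iterate_succ_apply'] using hn
  obtain ⟨N, hN⟩ := eventually_atTop.1
    (eventually_pow_le_of_sq_mul_le ((one_le_inv₀ hε0).2 hε1) hx hstep 2)
  filter_upwards [eventually_ge_atTop (x N)] with r hr
  obtain ⟨n, hnr, hrn⟩ := exists_le_lt_succ_of_tendsto hx ((hmono (Nat.zero_le N)).trans hr)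
  have hNn : N ≤ n := by
    by_contra! h
    exact (hrn.trans_le (hmono h)).not_ge hr
  have hxn : 0 < x n := hR0.trans_le (hmono (Nat.zero_le n))
  calc r⁻¹ ≤ (x n)⁻¹ := inv_anti₀ hxn hnr
    _ ≤ ε R0 ^ (n + 2) := by
      simpa [inv_pow] using inv_anti₀ (by positivity) (hN n hNn)
    _ ≤ ε (x (n + 1)) := hεM (n + 1) (by omega)
    _ ≤ ε r := hεmono r _ (hmono (Nat.zero_le N) |>.trans hr) hrn.le

/-- With `C = 4 / a` and `B = C^(n+k+1)`, the doubling estimate `M(B u) ≥ B³ M(u) / 4` absorbs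
the loss `a^(n+k+1)`. -/
lemma pow_mul_iterate_maxMod_le (hd : Differentiable ℂ f) {R a : ℝ} {t : ℕ → ℝ} {k : ℕ}
    (hM : ∀ r ≥ R, r ≤ maxMod f r)
    (hdouble : ∀ u ≥ R, ∀ B ≥ 2, B ^ 3 * maxMod f u ≤ 4 * maxMod f (B * u))
    (ha : 0 < a) (ha1 : a ≤ 1) (ht : ∀ n, a ^ (n + 1) * maxMod f (t n) ≤ t (n + 1))
    (hbase : (4 / a) ^ (k + 1) * R ≤ t k) (n : ℕ) :
    (4 / a) ^ (n + k + 1) * (maxMod f)^[n] R ≤ t (n + k) := by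
  induction n with
  | zero => simpa using hbase
  | succ n ih =>
    set C := 4 / a
    set N := n + k + 1
    set u := (maxMod f)^[n] R
    have hC : 4 ≤ C := by rw [le_div_iff₀ ha]; linarith
    have hCN : C ≤ C ^ N := le_self_pow₀ (by linarith) (by omega)
    have hcoef : 4 * C ^ (N + 1) ≤ a ^ N * (C ^ N) ^ 3 := by
      calc 4 * C ^ (N + 1) ≤ 4 ^ N * C ^ (2 * N) := by
            gcongr
            exacts [le_self_pow₀ (by norm_num) (by omega), by linarith, by omega]
        _ = a ^ N * (C ^ N) ^ 3 := by
            rw [show (4 : ℝ) = a * C from (mul_div_cancel₀ 4 ha.ne').symm]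
            ring
    have hu : R ≤ u := monotone_iterate_maxMod hd (hM R le_rfl) (Nat.zero_le n)
    calc C ^ (n + 1 + k + 1) * (maxMod f)^[n + 1] R = C ^ (N + 1) * maxMod f u := by
          rw [Function.iterate_succ_apply', show n + 1 + k + 1 = N + 1 by omega]
      _ ≤ a ^ N * ((C ^ N) ^ 3 * maxMod f u) / 4 := by
          rw [le_div_iff₀ four_pos]
          nlinarith [maxMod_nonneg f u]
      _ ≤ a ^ N * maxMod f (C ^ N * u) := by
          have := hdouble u hu (C ^ N) (by linarith)
          rw [div_le_iff₀ four_pos]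
          nlinarith [pow_pos ha N]
      _ ≤ a ^ N * maxMod f (t (n + k)) := by gcongr; exact maxMod_mono hd ih
      _ ≤ t (n + 1 + k) := by rw [show n + 1 + k = n + k + 1 by omega]; exact ht _

lemma exists_iterate_maxMod_le_iterate_add (hd : Differentiable ℂ f) {g : ℝ → ℝ} {R R' a : ℝ}
    (hR : 2 ≤ R) (hM : ∀ r ≥ R, r ≤ maxMod f r)
    (hdouble : ∀ u ≥ R, ∀ B ≥ 2, B ^ 3 * maxMod f u ≤ 4 * maxMod f (B * u))
    (hsq : ∀ r ≥ R, r ^ 2 ≤ g r) (hR' : R ≤ R') (ha : 0 < a) (ha1 : a ≤ 1)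
    (hg : ∀ n, a ^ (n + 1) * maxMod f (g^[n] R') ≤ g^[n + 1] R') :
    ∃ k, ∀ n, (maxMod f)^[n] R ≤ g^[n + k] R' := by
  set c := max (4 / a) R
  have hC : 1 ≤ 4 / a := by rw [le_div_iff₀ ha]; linarith
  obtain ⟨k, hk⟩ :=
    (eventually_pow_le_iterate_of_sq_le hR hsq hR' (hC.trans (le_max_left _ _)) 2).exists
  have hbase : (4 / a) ^ (k + 1) * R ≤ g^[k] R' :=
    calc (4 / a) ^ (k + 1) * R ≤ c ^ (k + 1) * c := by
          gcongr <;> first | exact le_max_left _ _ | exact le_max_right _ _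
      _ = c ^ (k + 2) := by ring
      _ ≤ g^[k] R' := hk
  refine ⟨k, fun n => ?_⟩
  have horbit : 0 ≤ (maxMod f)^[n] R :=
    (by linarith : (0 : ℝ) ≤ R).trans (monotone_iterate_maxMod hd (hM R le_rfl) (Nat.zero_le n))
  exact (le_mul_of_one_le_left horbit (one_le_pow₀ hC)).trans
    (pow_mul_iterate_maxMod_le hd hM hdouble ha ha1 hg hbase n)

lemma iterate_le_iterate_maxMod (hd : Differentiable ℂ f) {ε : ℝ → ℝ} {R R' : ℝ}
    (hε : ∀ r ≥ R, ε r ≤ 1) (hmaps : ∀ r ≥ R, R ≤ ε r * maxMod f r) (hR' : R ≤ R') (n : ℕ) :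
    (fun r => ε r * maxMod f r)^[n] R' ≤ (maxMod f)^[n] R' := by
  refine (maxMod_mono hd).seq_le_seq (x := fun n => (fun r => ε r * maxMod f r)^[n] R')
    (y := fun n => (maxMod f)^[n] R') n le_rfl (fun k _ => ?_)
    fun k _ => (Function.iterate_succ_apply' _ _ _).ge
  rw [Function.iterate_succ_apply']
  exact mul_le_of_le_one_left (maxMod_nonneg _ _)
    (hε _ (Set.MapsTo.iterate (s := Set.Ici R) hmaps k hR'))

lemma fastEscaping_eq_of_iterate_le (hd : Differentiable ℂ f) {t : ℕ → ℝ} {R R' : ℝ} {k : ℕ}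
    (hR : 0 < R) (hM : ∀ r ≥ R, r < maxMod f r) (hupper : ∀ n, t n ≤ (maxMod f)^[n] R')
    (hlower : ∀ n, (maxMod f)^[n] R ≤ t (n + k)) :
    fastEscaping f = {z | ∃ ℓ, ∀ n, t n ≤ ‖f^[n + ℓ] z‖} := by
  ext z
  constructor
  · rintro ⟨Rz, hRz, hMz, ℓ, hℓ⟩
    obtain ⟨m, hm⟩ := ((tendsto_iterate_maxMod hd hRz hMz).eventually_ge_atTop R').exists
    refine ⟨ℓ + m, fun n => ?_⟩
    calc t n ≤ (maxMod f)^[n] R' := hupper n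
      _ ≤ (maxMod f)^[n] ((maxMod f)^[m] Rz) := (maxMod_mono hd).iterate n hm
      _ = (maxMod f)^[n + m] Rz := (Function.iterate_add_apply _ n m Rz).symm
      _ ≤ ‖f^[n + (ℓ + m)] z‖ := by rw [add_comm ℓ, ← add_assoc]; exact hℓ _
  · rintro ⟨ℓ, hℓ⟩
    refine ⟨R, hR, hM, ℓ + k, fun n => (hlower n).trans ?_⟩
    simpa [add_assoc, add_comm k ℓ] using hℓ (n + k)

end Orbits

theorem simply_connected_fast_escaping_stmt0
    (f : ℂ → ℂ) (hf : EntireTranscendental f)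
    (R0 : ℝ) (hR0 : 0 < R0) (hM : ∀ r ≥ R0, r < maxMod f r)
    (ε : ℝ → ℝ)
    (hε01 : ∀ r ≥ R0, ε r ∈ Set.Ioo (0 : ℝ) 1)
    (hεmono : ∀ r s, R0 ≤ r → r ≤ s → ε s ≤ ε r)
    (hεM : ∀ r ≥ R0, ∀ n : ℕ, 1 ≤ n → ε r ^ (n + 1) ≤ ε ((maxMod f)^[n] r)) :
    ∃ R1 : ℝ, R0 ≤ R1 ∧ (∀ r ≥ R1, R1 ≤ ε r * maxMod f r) ∧
      ∀ R' ≥ R1,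
        fastEscaping f =
          {z : ℂ | ∃ ℓ : ℕ, ∀ n : ℕ,
            (fun r => ε r * maxMod f r)^[n] R' ≤ ‖f^[n + ℓ] z‖} := by
  set η := fun r => ε r * maxMod f r
  obtain ⟨R1, hR1⟩ := eventually_atTop.1 <| (eventually_ge_atTop (max R0 2)).and <|
    (eventually_inv_le_of_iterate_maxMod hf hR0 hM (hε01 R0 le_rfl).1 (hε01 R0 le_rfl).2.le hεmono
      (hεM R0 le_rfl)).and <|
    (eventually_mul_pow_le_maxMod hf 1 3).and (eventually_pow_mul_maxMod_le hf 3)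
  have hR0R1 : R0 ≤ R1 := (le_max_left _ _).trans (hR1 R1 le_rfl).1
  have hR1two : 2 ≤ R1 := (le_max_right _ _).trans (hR1 R1 le_rfl).1
  have hε : ∀ r ≥ R1, ε r ∈ Set.Ioo 0 1 := fun r hr => hε01 r (hR0R1.trans hr)
  have hsq : ∀ r ≥ R1, r ^ 2 ≤ η r := fun r hr => by
    obtain ⟨-, hεr, hMr, -⟩ := hR1 r hr
    have hr0 : 0 < r := by linarith
    calc r ^ 2 = r⁻¹ * (1 * r ^ 3) := by field_simp
      _ ≤ η r := mul_le_mul hεr hMr (by positivity) (hε r hr).1.le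
  have hmaps : ∀ r ≥ R1, R1 ≤ η r := fun r hr =>
    hr.trans ((le_self_pow₀ (by linarith) two_ne_zero).trans (hsq r hr))
  refine ⟨R1, hR0R1, hmaps, fun R' hR' => ?_⟩
  have hupper := iterate_le_iterate_maxMod hf.1 (fun r hr => (hε r hr).2.le) hmaps hR'
  have hstep : ∀ n, ε R' ^ (n + 1) * maxMod f (η^[n] R') ≤ η^[n + 1] R' := fun n => by
    rw [Function.iterate_succ_apply']
    refine mul_le_mul_of_nonneg_right ?_ (maxMod_nonneg _ _)
    rcases n.eq_zero_or_pos with rfl | hn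
    · simp
    exact (hεM R' (hR0R1.trans hR') n hn).trans (hεmono _ _
      (hR0R1.trans (Set.MapsTo.iterate (s := Set.Ici R1) hmaps n hR')) (hupper n))
  obtain ⟨k, hk⟩ := exists_iterate_maxMod_le_iterate_add hf.1 hR1two
    (fun r hr => (hM r (hR0R1.trans hr)).le) (fun u hu => (hR1 u hu).2.2.2) hsq hR'
    (hε R' hR').1 (hε R' hR').2.le hstep
  exact fastEscaping_eq_of_iterate_le hf.1 (by linarith) (fun r hr => hM r (hR0R1.trans hr))
    hupper hk
end Taylor
end

section
/- With the sequences (α_n) and (β_n) defined as in the context (for any fixed sufficiently large even integer N0), one has α_n / ((3/2)n²) → 1 and β_n / ((2/3)n²) → 1 as n → ∞. -/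
/-- `μ_n = n^{3/n}`. -/
noncomputable def muSeq (n : ℕ) : ℝ := (n : ℝ) ^ ((3 : ℝ) / n)

/-- `σ_n = Σ_{l=1}^{n-2} μ_n^l`. -/
noncomputable def sigmaSeq (n : ℕ) : ℝ := ∑ l ∈ Finset.Icc 1 (n - 2), muSeq n ^ l

/-!
Both limits are asymptotic equivalences. For `n > N0`, `2 α_n = 3n² + n + O(1)`, so
`α_n ~ (3/2) n²`. The numerator of `β_n` is `n⁴ - σ_n + O(n³)`, and `σ_n = o(n⁴)`: summing the
geometric series, `σ_n (μ_n - 1) ≤ μ_n ^ n = n³`, while `μ_n - 1 = exp (3 log n / n) - 1 ≥ 3 log n / n`,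
so `σ_n ≤ n⁴ / (3 log n)`. Hence `β_n ~ n⁴ / ((3/2) n²) = (2/3) n²`.
-/

open Filter Asymptotics

lemma muSeq_eq_exp {n : ℕ} (hn : 0 < n) : muSeq n = Real.exp (3 * Real.log n / n) := by
  rw [muSeq, Real.rpow_def_of_pos (by exact_mod_cast hn)]
  ring_nf

lemma muSeq_pow_self {n : ℕ} (hn : 0 < n) : muSeq n ^ n = (n : ℝ) ^ 3 := by
  rw [muSeq_eq_exp hn, ← Real.exp_nat_mul, mul_div_cancel₀ _ (by positivity),
    mul_comm, ← Real.rpow_def_of_pos (by positivity)]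
  norm_cast

lemma three_mul_log_div_le_muSeq_sub_one {n : ℕ} (hn : 0 < n) :
    3 * Real.log n / n ≤ muSeq n - 1 := by
  rw [muSeq_eq_exp hn]
  linarith [Real.add_one_le_exp (3 * Real.log n / n)]

lemma sigmaSeq_nonneg (n : ℕ) : 0 ≤ sigmaSeq n :=
  Finset.sum_nonneg fun _ _ => pow_nonneg (Real.rpow_nonneg n.cast_nonneg _) _

lemma sigmaSeq_mul_muSeq_sub_one {n : ℕ} (hn : 2 ≤ n) :
    sigmaSeq n * (muSeq n - 1) = muSeq n ^ (n - 1) - muSeq n := by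
  have hIcc : Finset.Icc 1 (n - 2) = Finset.Ico 1 (n - 1) := by
    rw [← Finset.Ico_add_one_right_eq_Icc]; congr 1; omega
  rw [sigmaSeq, hIcc, geom_sum_Ico_mul _ (by omega), pow_one]

lemma one_le_muSeq (n : ℕ) : 1 ≤ muSeq n := by
  rcases Nat.eq_zero_or_pos n with rfl | hn
  · simp [muSeq]
  · exact Real.one_le_rpow (by exact_mod_cast hn) (by positivity)

lemma three_mul_log_mul_sigmaSeq_le {n : ℕ} (hn : 2 ≤ n) :
    3 * Real.log n * sigmaSeq n ≤ (n : ℝ) ^ 4 := by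
  have hn0 : (0 : ℝ) < n := by positivity
  have hμ := one_le_muSeq n
  calc 3 * Real.log n * sigmaSeq n = n * (3 * Real.log n / n * sigmaSeq n) := by field_simp
    _ ≤ n * ((muSeq n - 1) * sigmaSeq n) := by
        gcongr
        exacts [sigmaSeq_nonneg n, three_mul_log_div_le_muSeq_sub_one (by omega)]
    _ = n * (muSeq n ^ (n - 1) - muSeq n) := by
        rw [mul_comm (muSeq n - 1), sigmaSeq_mul_muSeq_sub_one hn]
    _ ≤ n * muSeq n ^ n := by
        gcongr
        linarith [pow_le_pow_right₀ hμ (Nat.sub_le n 1)]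
    _ = (n : ℝ) ^ 4 := by rw [muSeq_pow_self (by omega)]; ring

lemma sigmaSeq_isLittleO : sigmaSeq =o[atTop] fun n : ℕ => (n : ℝ) ^ 4 := by
  refine isLittleO_iff.mpr fun c hc => ?_
  have hlog : ∀ᶠ n : ℕ in atTop, (3 * c)⁻¹ ≤ Real.log n :=
    (Real.tendsto_log_atTop.comp tendsto_natCast_atTop_atTop).eventually_ge_atTop _
  filter_upwards [hlog, eventually_ge_atTop 2] with n hlog hn
  have hσ := sigmaSeq_nonneg n
  have hbound := three_mul_log_mul_sigmaSeq_le hn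
  have h1 : 1 ≤ 3 * c * Real.log n := by
    rwa [inv_le_iff_one_le_mul₀' (by positivity)] at hlog
  rw [Real.norm_of_nonneg hσ, Real.norm_of_nonneg (by positivity)]
  nlinarith

lemma natCast_pow_isLittleO {p q : ℕ} (hpq : p < q) :
    (fun n : ℕ => (n : ℝ) ^ p) =o[atTop] fun n : ℕ => (n : ℝ) ^ q :=
  (isLittleO_pow_pow_atTop_of_lt hpq).comp_tendsto tendsto_natCast_atTop_atTop

lemma isEquivalent_of_two_mul_mem_Icc {a : ℕ → ℕ} {N : ℕ}
    (ha : ∀ n, N < n → 2 * a n ∈ Set.Icc (3 * n ^ 2 + n + 4) (3 * n ^ 2 + n + 6)) :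
    (fun n => (a n : ℝ)) ~[atTop] fun n : ℕ => 3 / 2 * (n : ℝ) ^ 2 := by
  have hdiff : (fun n => (a n : ℝ) - 3 / 2 * (n : ℝ) ^ 2) =O[atTop] fun n : ℕ => (n : ℝ) ^ 1 := by
    refine IsBigO.of_bound 4 ?_
    filter_upwards [eventually_gt_atTop N] with n hn
    obtain ⟨hlo, hhi⟩ := ha n hn
    have hlo' : (3 * n ^ 2 + n + 4 : ℝ) ≤ 2 * a n := by exact_mod_cast hlo
    have hhi' : (2 * a n : ℝ) ≤ 3 * n ^ 2 + n + 6 := by exact_mod_cast hhi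
    have hn1 : (1 : ℝ) ≤ n := by exact_mod_cast (by omega : 1 ≤ n)
    rw [Real.norm_eq_abs, Real.norm_of_nonneg (by positivity), abs_le]
    constructor <;> linarith
  exact hdiff.trans_isLittleO
    ((natCast_pow_isLittleO one_lt_two).const_mul_right' (isUnit_iff_ne_zero.mpr (by norm_num)))

lemma isEquivalent_pow_four_of_eq_sub_sigmaSeq {b : ℕ → ℝ}
    (hb : ∀ᶠ n in atTop, b n = (n : ℝ) ^ 4 - sigmaSeq n ∨
      b n = (n : ℝ) ^ 3 * (2 * (n : ℝ) - 1) / 2 - sigmaSeq n) :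
    b ~[atTop] fun n : ℕ => (n : ℝ) ^ 4 := by
  have hdiff : (fun n => b n - (n : ℝ) ^ 4) =O[atTop] fun n => sigmaSeq n + (n : ℝ) ^ 3 := by
    refine IsBigO.of_bound 1 ?_
    filter_upwards [hb] with n hbn
    have hσ := sigmaSeq_nonneg n
    have hn3 : (0 : ℝ) ≤ (n : ℝ) ^ 3 := by positivity
    rw [one_mul, Real.norm_eq_abs, Real.norm_of_nonneg (by positivity), abs_le]
    rcases hbn with h | h <;> rw [h] <;> constructor <;> nlinarith
  exact hdiff.trans_isLittleO (sigmaSeq_isLittleO.add (natCast_pow_isLittleO (by norm_num)))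

theorem simply_connected_fast_escaping_stmt5_general
    (N0 : ℕ)
    (α : ℕ → ℕ) (β : ℕ → ℝ)
    (hα3 : ∀ n, N0 < n → Even n → 2 * α n = 3 * n ^ 2 + n + 6)
    (hα4 : ∀ n, N0 < n → Odd n → 2 * α n = 3 * n ^ 2 + n + 4)
    (hβ2 : ∀ n, N0 ≤ n → Even n → β n = ((n : ℝ) ^ 4 - sigmaSeq n) / (α n : ℝ))
    (hβ3 : ∀ n, N0 ≤ n → Odd n →
      β n = ((n : ℝ) ^ 3 * (2 * (n : ℝ) - 1) / 2 - sigmaSeq n) / (α n : ℝ)) :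
    Filter.Tendsto (fun n : ℕ => (α n : ℝ) / ((3 / 2) * (n : ℝ) ^ 2))
      Filter.atTop (nhds 1) ∧
    Filter.Tendsto (fun n : ℕ => β n / ((2 / 3) * (n : ℝ) ^ 2))
      Filter.atTop (nhds 1) := by
  have hα : (fun n => (α n : ℝ)) ~[atTop] fun n : ℕ => 3 / 2 * (n : ℝ) ^ 2 := by
    refine isEquivalent_of_two_mul_mem_Icc (N := N0) fun n hn => ?_
    rcases Nat.even_or_odd n with h | h
    · rw [hα3 n hn h]; exact ⟨by omega, le_rfl⟩
    · rw [hα4 n hn h]; exact ⟨le_rfl, by omega⟩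
  have hn_pos : ∀ᶠ n : ℕ in atTop, (0 : ℝ) < n := by
    filter_upwards [eventually_gt_atTop 0] with n hn using by exact_mod_cast hn
  have hα_ne : ∀ᶠ n in atTop, (α n : ℝ) ≠ 0 :=
    (hα.eventually_pos (by filter_upwards [hn_pos] with n hn using by positivity)).mono
      fun _ h => h.ne'
  have hβα : (fun n => β n * α n) ~[atTop] fun n : ℕ => (n : ℝ) ^ 4 := by
    refine isEquivalent_pow_four_of_eq_sub_sigmaSeq ?_
    filter_upwards [eventually_gt_atTop N0, hα_ne] with n hn hαn
    rcases Nat.even_or_odd n with h | h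
    · exact .inl (by rw [hβ2 n hn.le h, div_mul_cancel₀ _ hαn])
    · exact .inr (by rw [hβ3 n hn.le h, div_mul_cancel₀ _ hαn])
  have hβ : β ~[atTop] fun n : ℕ => 2 / 3 * (n : ℝ) ^ 2 := by
    refine ((hβα.div hα).congr_left ?_).congr_right ?_
    · filter_upwards [hα_ne] with n hαn using mul_div_cancel_right₀ _ hαn
    · filter_upwards [hn_pos] with n hn
      simp only [Pi.div_apply]
      field_simp
  have hsq_ne {c : ℝ} (hc : c ≠ 0) : ∀ᶠ n : ℕ in atTop, c * (n : ℝ) ^ 2 ≠ 0 := by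
    filter_upwards [hn_pos] with n hn using by positivity
  exact ⟨(isEquivalent_iff_tendsto_one (hsq_ne (by norm_num))).mp hα,
    (isEquivalent_iff_tendsto_one (hsq_ne (by norm_num))).mp hβ⟩

theorem simply_connected_fast_escaping_stmt5
    (N0 : ℕ) (hN0even : Even N0) (hN0 : 4 ≤ N0)
    (α : ℕ → ℕ) (β : ℕ → ℝ)
    (hα1 : ∀ n < N0, α n = 0)
    (hα2 : 2 * α N0 = N0 ^ 3 + 2 * N0 ^ 2 + 6 * N0 + 2)
    (hα3 : ∀ n, N0 < n → Even n → 2 * α n = 3 * n ^ 2 + n + 6)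
    (hα4 : ∀ n, N0 < n → Odd n → 2 * α n = 3 * n ^ 2 + n + 4)
    (hβ1 : ∀ n < N0, β n = 0)
    (hβ2 : ∀ n, N0 ≤ n → Even n → β n = ((n : ℝ) ^ 4 - sigmaSeq n) / (α n : ℝ))
    (hβ3 : ∀ n, N0 ≤ n → Odd n →
      β n = ((n : ℝ) ^ 3 * (2 * (n : ℝ) - 1) / 2 - sigmaSeq n) / (α n : ℝ)) :
    Filter.Tendsto (fun n : ℕ => (α n : ℝ) / ((3 / 2) * (n : ℝ) ^ 2))
      Filter.atTop (nhds 1) ∧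
    Filter.Tendsto (fun n : ℕ => β n / ((2 / 3) * (n : ℝ) ^ 2))
      Filter.atTop (nhds 1) :=
  simply_connected_fast_escaping_stmt5_general N0 α β hα3 hα4 hβ2 hβ3
end
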